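/- For n ≥ 1, the coefficient identity: writing the Hadamard-walk path sum Ξ_{2n}(n,n) (sum over all products of n copies of P = (1/√2)[[1,1],[0,0]] and n copies of Q = (1/√2)[[0,0],[1,−1]]) in the basis {P, Q, R, S} with R = (1/√2)[[1,−1],[0,0]], S = (1/√2)[[0,0],[1,1]], the R-coefficient equals (1/√2)^{2n-1} ∑_{γ=1}^{n} (−1)^{n−γ} C(n−1, γ−1)², and it equals the S-coefficient. -/

import Mathlib

open Matrix

/-- Sum over all products of n copies of P and n copies of Q (in every order),
the Hadamard-walk path sum, as a real matrix. -/
noncomputable def hadamardXi (n : ℕ) : Matrix (Fin 2) (Fin 2) ℝ :=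
  ∑ w ∈ Finset.univ.filter
      (fun w : Fin (2 * n) → Bool => (Finset.univ.filter fun i => w i = true).card = n),
    (List.ofFn fun i : Fin (2 * n) =>
      if w i then !![(0 : ℝ), 0; 1 / Real.sqrt 2, -(1 / Real.sqrt 2)]
      else !![(1 / Real.sqrt 2 : ℝ), 1 / Real.sqrt 2; 0, 0]).prod

/-!
Write `P₀ = √2 P`, `Q₀ = √2 Q`; then `√2 ^ (2n) Ξ_{2n}(n,n)` is the coefficient of `Xⁿ` in
`N ^ (2n)`, where `N = P₀ + X Q₀`. Since `N² = (1 - X) N + 2X`, every power is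
`N ^ (k + 1) = U (k + 1) N + 2X U k` with `U` the Lucas sequence of `(1 - X, 2X)`. The
`R`- and `S`-coefficients are, up to `1/√2`, the functionals `M ↦ M₀₀ - M₀₁` and
`M ↦ M₁₀ + M₁₁`; both vanish on `N` and are `1` on the identity, so both read off
`2X U (2n - 1)`. Finally `[X^m] U (l + m + 1) = [Y^m] (1 + Y)^l (1 - Y)^m`, since both sides
are the coefficient of `x^l y^m` in `1 / (1 - x + y - 2xy)` and so obey the same
two-dimensional recurrence; at `l = m = n - 1` the right side is the alternating sum of
squared binomial coefficients.
-/

open Polynomial Finset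

theorem sum_prod_ofFn_eq_pow {R : Type*} [Semiring R] (f : Bool → R) : ∀ k : ℕ,
    ∑ w : Fin k → Bool, (List.ofFn fun i => f (w i)).prod = (f false + f true) ^ k
  | 0 => by simp
  | k + 1 => by
    rw [← (Fin.consEquiv fun _ => Bool).sum_comp, Fintype.sum_prod_type, Fintype.sum_bool,
      pow_succ', ← sum_prod_ofFn_eq_pow f k, add_mul, mul_sum, mul_sum, add_comm]
    simp [Fin.consEquiv, List.ofFn_succ]

theorem List.prod_ofFn_smul {R A : Type*} [CommSemiring R] [Semiring A] [Algebra R A] :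
    ∀ {k : ℕ} (c : Fin k → R) (g : Fin k → A),
      (List.ofFn fun i => c i • g i).prod = (∏ i, c i) • (List.ofFn g).prod
  | 0, _, _ => by simp
  | k + 1, c, g => by
    simp only [List.ofFn_succ, List.prod_cons, Fin.prod_univ_succ,
      List.prod_ofFn_smul (fun i => c i.succ), smul_mul_smul_comm]

theorem coeff_pow_map_C_add_X_smul {n R : Type*} [Fintype n] [DecidableEq n] [CommRing R]
    (A B : Matrix n n R) (k m : ℕ) (i j : n) :
    (((A.map C + (X : R[X]) • B.map C) ^ k) i j).coeff m =
      ∑ w ∈ univ.filter (fun w : Fin k → Bool => (univ.filter fun t => w t = true).card = m),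
        (List.ofFn fun t => if w t then B else A).prod i j := by
  have hletter : ∀ b : Bool, (if b then (X : R[X]) • B.map C else A.map C) =
      (X : R[X]) ^ (if b then 1 else 0) • (if b then B else A).map C := by
    intro b; cases b <;> simp
  have hword : ∀ w : Fin k → Bool,
      (List.ofFn fun t => if w t then (X : R[X]) • B.map C else A.map C).prod =
        (X : R[X]) ^ (univ.filter fun t => w t = true).card •
          (List.ofFn fun t => if w t then B else A).prod.map C := by
    intro w
    simp only [hletter, List.prod_ofFn_smul, prod_pow_eq_pow_sum, sum_boole, Nat.cast_id]
    rw [← RingHom.mapMatrix_apply, map_list_prod, List.map_ofFn]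
    rfl
  have hsum := sum_prod_ofFn_eq_pow (fun b => if b then (X : R[X]) • B.map C else A.map C) k
  simp only [Bool.false_eq_true, if_false, if_true] at hsum
  rw [← hsum, Matrix.sum_apply, finsetSum_coeff, sum_filter]
  refine sum_congr rfl fun w _ => ?_
  rw [hword, Matrix.smul_apply, map_apply, smul_eq_mul, mul_comm, coeff_C_mul_X_pow]
  simp only [eq_comm]

theorem Polynomial.coeff_one_sub_X_pow {R : Type*} [CommRing R] (n k : ℕ) :
    ((1 - X : R[X]) ^ n).coeff k = (-1) ^ k * n.choose k := by
  have : (1 - X : R[X]) ^ n = ((1 + X) ^ n).comp (C (-1) * X) := by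
    simp [sub_eq_add_neg]
  rw [this, comp_C_mul_X_coeff, coeff_one_add_X_pow, mul_comm]

def lucasSeq {R : Type*} [CommSemiring R] (p s : R) : ℕ → R
  | 0 => 0
  | 1 => 1
  | k + 2 => p * lucasSeq p s (k + 1) + s * lucasSeq p s k

theorem pow_succ_eq_lucasSeq_smul {R A : Type*} [CommSemiring R] [Semiring A] [Algebra R A]
    {p s : R} {M : A} (hM : M ^ 2 = p • M + s • 1) :
    ∀ k : ℕ, M ^ (k + 1) = lucasSeq p s (k + 1) • M + (s * lucasSeq p s k) • 1
  | 0 => by simp [lucasSeq]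
  | k + 1 => by
    rw [pow_succ, pow_succ_eq_lucasSeq_smul hM k, add_mul, smul_mul_assoc, ← sq, hM,
      smul_mul_assoc, one_mul, lucasSeq]
    module

noncomputable def hadamardTransfer : Matrix (Fin 2) (Fin 2) ℝ[X] := !![1, 1; X, -X]

theorem hadamardTransfer_eq_map_C_add_X_smul :
    hadamardTransfer = (!![1, 1; 0, 0] : Matrix (Fin 2) (Fin 2) ℝ).map C +
      (X : ℝ[X]) • (!![0, 0; 1, -1] : Matrix (Fin 2) (Fin 2) ℝ).map C := by
  ext i j; fin_cases i <;> fin_cases j <;> simp [hadamardTransfer]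

theorem hadamardTransfer_sq :
    hadamardTransfer ^ 2 = (1 - X : ℝ[X]) • hadamardTransfer + (2 * X : ℝ[X]) • 1 := by
  ext i j : 1
  fin_cases i <;> fin_cases j <;> simp [hadamardTransfer, sq] <;> ring

theorem hadamardXi_apply (n : ℕ) (i j : Fin 2) :
    hadamardXi n i j = (1 / √2) ^ (2 * n) * ((hadamardTransfer ^ (2 * n)) i j).coeff n := by
  rw [hadamardTransfer_eq_map_C_add_X_smul, coeff_pow_map_C_add_X_smul, mul_sum, hadamardXi,
    Matrix.sum_apply]
  refine sum_congr rfl fun w _ => ?_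
  have hletter : ∀ t,
      (if w t then !![(0 : ℝ), 0; 1 / √2, -(1 / √2)] else !![1 / √2, 1 / √2; 0, 0]) =
      (1 / √2 : ℝ) • (if w t then !![(0 : ℝ), 0; 1, -1] else !![1, 1; 0, 0]) := by
    intro t; cases w t <;> ext a b <;> fin_cases a <;> fin_cases b <;> simp
  simp only [hletter, List.prod_ofFn_smul, prod_const, card_univ, Fintype.card_fin,
    Matrix.smul_apply, smul_eq_mul]

theorem trace_R_hadamardXi (n : ℕ) :
    ((!![1 / √2, -(1 / √2); 0, 0] : Matrix (Fin 2) (Fin 2) ℝ)ᵀ * hadamardXi n).trace =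
      (1 / √2) ^ (2 * n + 1) *
        ((hadamardTransfer ^ (2 * n)) 0 0 - (hadamardTransfer ^ (2 * n)) 0 1).coeff n := by
  simp [trace_fin_two, mul_apply, Fin.sum_univ_two, hadamardXi_apply]
  ring

theorem trace_S_hadamardXi (n : ℕ) :
    ((!![0, 0; 1 / √2, 1 / √2] : Matrix (Fin 2) (Fin 2) ℝ)ᵀ * hadamardXi n).trace =
      (1 / √2) ^ (2 * n + 1) *
        ((hadamardTransfer ^ (2 * n)) 1 0 + (hadamardTransfer ^ (2 * n)) 1 1).coeff n := by
  simp [trace_fin_two, mul_apply, Fin.sum_univ_two, hadamardXi_apply]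
  ring

noncomputable abbrev hadamardLucas : ℕ → ℝ[X] := lucasSeq (1 - X) (2 * X)

theorem hadamardTransfer_pow_succ_R (k : ℕ) :
    (hadamardTransfer ^ (k + 1)) 0 0 - (hadamardTransfer ^ (k + 1)) 0 1 =
      2 * X * hadamardLucas k := by
  rw [pow_succ_eq_lucasSeq_smul hadamardTransfer_sq]
  simp [hadamardTransfer]

theorem hadamardTransfer_pow_succ_S (k : ℕ) :
    (hadamardTransfer ^ (k + 1)) 1 0 + (hadamardTransfer ^ (k + 1)) 1 1 =
      2 * X * hadamardLucas k := by
  rw [pow_succ_eq_lucasSeq_smul hadamardTransfer_sq]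
  simp [hadamardTransfer]

theorem hadamardLucas_add_two (k : ℕ) :
    hadamardLucas (k + 2) = (1 - X) * hadamardLucas (k + 1) + 2 * X * hadamardLucas k := rfl

theorem coeff_hadamardLucas_add_two_zero (k : ℕ) :
    (hadamardLucas (k + 2)).coeff 0 = (hadamardLucas (k + 1)).coeff 0 := by
  simp [hadamardLucas_add_two, coeff_zero_eq_eval_zero]

theorem coeff_hadamardLucas_add_two_succ (k m : ℕ) :
    (hadamardLucas (k + 2)).coeff (m + 1) = (hadamardLucas (k + 1)).coeff (m + 1) -
      (hadamardLucas (k + 1)).coeff m + 2 * (hadamardLucas k).coeff m := by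
  rw [hadamardLucas_add_two, sub_mul, one_mul, mul_assoc, coeff_add, coeff_sub, coeff_X_mul,
    coeff_ofNat_mul, coeff_X_mul]

theorem coeff_hadamardLucas_eq_zero_of_le :
    ∀ {k m : ℕ}, k ≤ m → (hadamardLucas k).coeff m = 0
  | 0, _, _ => by simp [lucasSeq]
  | 1, m, h => by simp [lucasSeq, coeff_one, show m ≠ 0 by omega]
  | k + 2, m + 1, h => by
    rw [coeff_hadamardLucas_add_two_succ, coeff_hadamardLucas_eq_zero_of_le (by omega),
      coeff_hadamardLucas_eq_zero_of_le (by omega),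
      coeff_hadamardLucas_eq_zero_of_le (k := k) (by omega)]
    ring

theorem coeff_hadamardLucas_succ_zero : ∀ k : ℕ, (hadamardLucas (k + 1)).coeff 0 = 1
  | 0 => by simp [lucasSeq]
  | k + 1 => by rw [coeff_hadamardLucas_add_two_zero, coeff_hadamardLucas_succ_zero k]

noncomputable def hadamardCoeff (l m : ℕ) : ℝ := ((1 + X) ^ l * (1 - X) ^ m : ℝ[X]).coeff m

theorem hadamardCoeff_zero_right (l : ℕ) : hadamardCoeff l 0 = 1 := by
  simp [hadamardCoeff, coeff_zero_eq_eval_zero]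

theorem hadamardCoeff_zero_left (m : ℕ) : hadamardCoeff 0 m = (-1) ^ m := by
  simp [hadamardCoeff, coeff_one_sub_X_pow]

theorem hadamardCoeff_succ_succ (l m : ℕ) :
    hadamardCoeff (l + 1) (m + 1) =
      hadamardCoeff l (m + 1) - hadamardCoeff (l + 1) m + 2 * hadamardCoeff l m := by
  set F : ℝ[X] := (1 + X) ^ l * (1 - X) ^ m
  have h11 : (1 + X) ^ (l + 1) * (1 - X) ^ (m + 1) = F - X * (X * F) := by ring
  have h01 : (1 + X) ^ l * (1 - X) ^ (m + 1) = F - X * F := by ring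
  have h10 : (1 + X) ^ (l + 1) * (1 - X) ^ m = F + X * F := by ring
  simp only [hadamardCoeff, h11, h01, h10, coeff_sub, coeff_add, coeff_X_mul]
  cases m with
  | zero => simp [F, coeff_zero_eq_eval_zero]; ring
  | succ m => rw [coeff_X_mul]; ring

theorem hadamardCoeff_self (m : ℕ) :
    hadamardCoeff m m =
      ∑ γ ∈ Icc 1 (m + 1), (-1 : ℝ) ^ (m + 1 - γ) * (m.choose (γ - 1) : ℝ) ^ 2 := by
  rw [hadamardCoeff, coeff_mul, Nat.sum_antidiagonal_eq_sum_range_succ_mk,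
    ← Ico_add_one_right_eq_Icc, sum_Ico_eq_sum_range]
  refine sum_congr (by simp) fun i hi => ?_
  have hi : i ≤ m := Nat.lt_succ_iff.mp (mem_range.mp hi)
  rw [coeff_one_add_X_pow, coeff_one_sub_X_pow, Nat.choose_symm hi]
  simp only [Nat.add_sub_cancel_left, show m + 1 - (1 + i) = m - i by omega]
  ring

theorem coeff_hadamardLucas (l m : ℕ) :
    (hadamardLucas (l + m + 1)).coeff m = hadamardCoeff l m := by
  induction m generalizing l with
  | zero => rw [coeff_hadamardLucas_succ_zero, hadamardCoeff_zero_right]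
  | succ m ihm =>
    induction l with
    | zero =>
      have h := ihm 0
      rw [zero_add] at h ⊢
      rw [coeff_hadamardLucas_add_two_succ, coeff_hadamardLucas_eq_zero_of_le le_rfl,
        coeff_hadamardLucas_eq_zero_of_le le_rfl, h, hadamardCoeff_zero_left,
        hadamardCoeff_zero_left]
      ring
    | succ l ihl =>
      rw [show l + 1 + (m + 1) + 1 = l + m + 1 + 2 by ring, coeff_hadamardLucas_add_two_succ,
        hadamardCoeff_succ_succ, ← ihl, ← ihm, ← ihm]
      ring_nf

theorem coeff_two_X_mul_hadamardLucas (m : ℕ) :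
    (2 * X * hadamardLucas (2 * m + 1)).coeff (m + 1) = 2 * hadamardCoeff m m := by
  rw [mul_assoc, coeff_ofNat_mul, coeff_X_mul, two_mul m, coeff_hadamardLucas]

theorem one_div_sqrt_two_pow_add_two_mul_two (k : ℕ) :
    (1 / √2 : ℝ) ^ (k + 2) * 2 = (1 / √2) ^ k := by
  rw [pow_add, div_pow 1 √2 2, Real.sq_sqrt zero_le_two]
  ring

theorem hadamard_xi_R_coefficient (n : ℕ) (hn : 1 ≤ n) :
    let R : Matrix (Fin 2) (Fin 2) ℝ := !![(1 / Real.sqrt 2 : ℝ), -(1 / Real.sqrt 2); 0, 0]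
    let S : Matrix (Fin 2) (Fin 2) ℝ := !![(0 : ℝ), 0; 1 / Real.sqrt 2, 1 / Real.sqrt 2]
    (Rᵀ * hadamardXi n).trace =
        (1 / Real.sqrt 2) ^ (2 * n - 1) *
          ∑ γ ∈ Finset.Icc 1 n, (-1 : ℝ) ^ (n - γ) * ((n - 1).choose (γ - 1) : ℝ) ^ 2 ∧
      (Rᵀ * hadamardXi n).trace = (Sᵀ * hadamardXi n).trace := by
  obtain ⟨m, rfl⟩ := Nat.exists_eq_add_of_le' hn
  dsimp only
  rw [trace_R_hadamardXi, trace_S_hadamardXi, show 2 * (m + 1) = 2 * m + 1 + 1 by ring,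
    hadamardTransfer_pow_succ_R, hadamardTransfer_pow_succ_S, coeff_two_X_mul_hadamardLucas,
    Nat.add_sub_cancel, Nat.add_sub_cancel, ← hadamardCoeff_self,
    ← one_div_sqrt_two_pow_add_two_mul_two (2 * m + 1)]
  exact ⟨by ring, rfl⟩
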